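/- arXiv:1302.4660 — 2 statements merged into one kernel-verified Lean document; each statement's English description precedes it below -/
import Mathlib

section
/- (Theorem 2, case ρ2 < M < ρ12.) Assume μ1 = μ2 = 0, let ρ1 = rank(Σ1), ρ2 = rank(Σ2), ρ12 = rank(Σ1 + Σ2), assume ρ1 ≤ ρ2 ≤ ρ12, and assume the rank relations r1 = min(M, ρ1), r2 = min(M, ρ2), r12 = min(M, ρ12). If ρ2 < M < ρ12, then lim_{σ² → 0+} log P̄_err(σ²) / log σ² = (2M − ρ1 − ρ2)/4; i.e., the diversity order is d = −(1/2)·((ρ1 + ρ2)/2 − M) = (2M − ρ1 − ρ2)/4. -/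
open Matrix MeasureTheory Filter Real Topology

/-- Pseudo-determinant of a real square matrix: the product of the nonzero
eigenvalues when the matrix is Hermitian (symmetric), with the empty product
equal to 1; junk value 0 otherwise. -/
noncomputable def pdet {n : ℕ} (A : Matrix (Fin n) (Fin n) ℝ) : ℝ :=
  if h : A.IsHermitian then
    ∏ i ∈ Finset.univ.filter (fun i => h.eigenvalues i ≠ 0), h.eigenvalues i
  else 0

/-- Bhattacharyya exponent `K(σ²)` for the two-class compressive
classification problem, as a function of the noise level `s = σ²`. -/
noncomputable def Kb {M N : ℕ} (Φ : Matrix (Fin M) (Fin N) ℝ)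
    (S1 S2 : Matrix (Fin N) (Fin N) ℝ) (μ1 μ2 : Fin N → ℝ) (s : ℝ) : ℝ :=
  1/8 * ((Φ *ᵥ (μ1 - μ2)) ⬝ᵥ
      (((1/2 : ℝ) • (Φ * (S1 + S2) * Φᵀ + s • (1 : Matrix (Fin M) (Fin M) ℝ)))⁻¹
        *ᵥ (Φ *ᵥ (μ1 - μ2))))
  + 1/2 * Real.log
      (((1/2 : ℝ) • (Φ * (S1 + S2) * Φᵀ + s • (1 : Matrix (Fin M) (Fin M) ℝ))).det /
        Real.sqrt ((Φ * S1 * Φᵀ + s • (1 : Matrix (Fin M) (Fin M) ℝ)).det *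
          (Φ * S2 * Φᵀ + s • (1 : Matrix (Fin M) (Fin M) ℝ)).det))

/-- Bhattacharyya upper bound `P̄_err(σ²)` to the misclassification probability. -/
noncomputable def Perr {M N : ℕ} (Φ : Matrix (Fin M) (Fin N) ℝ)
    (S1 S2 : Matrix (Fin N) (Fin N) ℝ) (μ1 μ2 : Fin N → ℝ) (P1 P2 : ℝ) (s : ℝ) : ℝ :=
  Real.sqrt (P1 * P2) * Real.exp (-(Kb Φ S1 S2 μ1 μ2 s))

/-! With zero means only the log-determinant term of `K(σ²)` survives. Diagonalising a positive
semidefinite `A` of size `m` and rank `r` gives `det (A + σ² I) = ∏ (λᵢ + σ²)`, hence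
`log det (A + σ² I) = (m - r) log σ² + log (pdet A) + o(1)` as `σ² → 0⁺`. Therefore
`log P̄_err(σ²) / log σ² → r12 / 2 - (r1 + r2) / 4`, and the rank hypotheses in the case
`ρ2 < M < ρ12` turn this into `(2M - ρ1 - ρ2) / 4`. -/

theorem tendsto_div_log_of_tendsto_sub_mul_log {f : ℝ → ℝ} {c D : ℝ}
    (hf : Tendsto (fun s => f s - D * log s) (𝓝[>] 0) (𝓝 c)) :
    Tendsto (fun s => f s / log s) (𝓝[>] 0) (𝓝 D) := by
  have hinv : Tendsto (fun s => (log s)⁻¹) (𝓝[>] 0) (𝓝 0) :=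
    tendsto_inv_atBot_zero.comp tendsto_log_nhdsGT_zero
  have hlim := (hf.mul hinv).add_const D
  rw [mul_zero, zero_add] at hlim
  refine hlim.congr' ?_
  filter_upwards [tendsto_log_nhdsGT_zero.eventually_lt_atBot 0] with s hs
  rw [sub_mul, mul_inv_cancel_right₀ hs.ne, sub_add_cancel, div_eq_mul_inv]

namespace Matrix

theorem PosSemidef.mul_mul_transpose_same {m n : Type*} [Fintype n] [Finite m]
    {A : Matrix n n ℝ} (hA : A.PosSemidef) (B : Matrix m n ℝ) : (B * A * Bᵀ).PosSemidef := by
  simpa only [conjTranspose_eq_transpose_of_trivial] using hA.mul_mul_conjTranspose_same B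

variable {n : Type*} [Fintype n] [DecidableEq n]

theorem IsHermitian.det_add_smul_one {A : Matrix n n ℝ} (hA : A.IsHermitian) (s : ℝ) :
    (A + s • (1 : Matrix n n ℝ)).det = ∏ i, (hA.eigenvalues i + s) := by
  set U : Matrix n n ℝ := (hA.eigenvectorUnitary : Matrix n n ℝ)
  have hU : U * star U = 1 := mem_unitaryGroup_iff.mp hA.eigenvectorUnitary.2
  have hconj : A + s • (1 : Matrix n n ℝ)
      = U * (diagonal (RCLike.ofReal ∘ hA.eigenvalues) + s • 1) * star U := by
    rw [mul_add, add_mul, Matrix.mul_smul, mul_one, smul_mul_assoc, hU]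
    exact congrArg (· + s • 1) hA.spectral_theorem
  rw [hconj, det_mul_right_comm, hU, one_mul, smul_one_eq_diagonal, diagonal_add, det_diagonal]
  simp

theorem PosSemidef.det_add_smul_one_pos {A : Matrix n n ℝ} (hA : A.PosSemidef) {s : ℝ}
    (hs : 0 < s) : 0 < (A + s • (1 : Matrix n n ℝ)).det :=
  (PosDef.posSemidef_add hA (PosDef.one.smul hs)).det_pos

theorem PosSemidef.log_det_add_smul_one {A : Matrix n n ℝ} (hA : A.PosSemidef) {s : ℝ}
    (hs : 0 < s) :
    log (A + s • (1 : Matrix n n ℝ)).det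
      = ∑ i ∈ Finset.univ.filter (fun i => hA.1.eigenvalues i ≠ 0), log (hA.1.eigenvalues i + s)
        + (Fintype.card n - A.rank) * log s := by
  set ev := hA.1.eigenvalues
  have hzero : ∀ i ∈ Finset.univ.filter (fun i => ¬ ev i ≠ 0), ev i + s = s := by
    intro i hi
    rw [not_not.mp (Finset.mem_filter.mp hi).2, zero_add]
  have hpos : ∀ i, 0 < ev i + s := fun i => add_pos_of_nonneg_of_pos (hA.eigenvalues_nonneg i) hs
  have hcard : ((Finset.univ.filter (fun i => ¬ ev i ≠ 0)).card : ℝ)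
      = Fintype.card n - A.rank := by
    rw [hA.1.rank_eq_card_non_zero_eigs, Fintype.card_subtype, eq_sub_iff_add_eq, ← Nat.cast_add,
      add_comm, Finset.card_filter_add_card_filter_not, Finset.card_univ]
  rw [hA.1.det_add_smul_one, ← Finset.prod_filter_mul_prod_filter_not Finset.univ (ev · ≠ 0),
    Finset.prod_congr rfl hzero, Finset.prod_const, log_mul (Finset.prod_ne_zero_iff.mpr
      fun i _ => (hpos i).ne') (pow_ne_zero _ hs.ne'), log_pow, hcard,
    log_prod fun i _ => (hpos i).ne']

theorem PosSemidef.tendsto_log_det_add_smul_one_sub_mul_log {m : ℕ}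
    {A : Matrix (Fin m) (Fin m) ℝ} (hA : A.PosSemidef) :
    Tendsto (fun s => log (A + s • (1 : Matrix (Fin m) (Fin m) ℝ)).det - (m - A.rank) * log s)
      (𝓝[>] 0) (𝓝 (log (pdet A))) := by
  set T := Finset.univ.filter (fun i => hA.1.eigenvalues i ≠ 0)
  have hcont : ∀ i ∈ T, ContinuousAt (fun s => log (hA.1.eigenvalues i + s)) 0 := fun i hi =>
    (continuousAt_const.add continuousAt_id).log (by simpa using (Finset.mem_filter.mp hi).2)
  have hpdet : log (pdet A) = ∑ i ∈ T, log (hA.1.eigenvalues i + 0) := by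
    simp only [pdet, dif_pos hA.1, add_zero]
    exact log_prod fun i hi => (Finset.mem_filter.mp hi).2
  rw [hpdet]
  refine (tendsto_finsetSum T fun i hi => (hcont i hi).tendsto.mono_left nhdsWithin_le_nhds).congr'
    ?_
  filter_upwards [self_mem_nhdsWithin] with s hs
  rw [hA.log_det_add_smul_one hs, Fintype.card_fin, add_sub_cancel_right]

end Matrix

section Bhattacharyya

variable {M N : ℕ} (Φ : Matrix (Fin M) (Fin N) ℝ) {S1 S2 : Matrix (Fin N) (Fin N) ℝ}

theorem log_Perr (μ1 μ2 : Fin N → ℝ) {P1 P2 : ℝ} (hP : 0 < P1 * P2) (s : ℝ) :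
    log (Perr Φ S1 S2 μ1 μ2 P1 P2 s) = log (sqrt (P1 * P2)) - Kb Φ S1 S2 μ1 μ2 s := by
  rw [Perr, log_mul (sqrt_pos.mpr hP).ne' (exp_ne_zero _), log_exp, sub_eq_add_neg]

theorem Kb_zero_means (hS1 : S1.PosSemidef) (hS2 : S2.PosSemidef) {s : ℝ} (hs : 0 < s) :
    Kb Φ S1 S2 0 0 s
      = (M * log (1 / 2) + log (Φ * (S1 + S2) * Φᵀ + s • (1 : Matrix (Fin M) (Fin M) ℝ)).det
          - (log (Φ * S1 * Φᵀ + s • (1 : Matrix (Fin M) (Fin M) ℝ)).det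
            + log (Φ * S2 * Φᵀ + s • (1 : Matrix (Fin M) (Fin M) ℝ)).det) / 2) / 2 := by
  have h1 := (hS1.mul_mul_transpose_same Φ).det_add_smul_one_pos hs
  have h2 := (hS2.mul_mul_transpose_same Φ).det_add_smul_one_pos hs
  have h12 := ((hS1.add hS2).mul_mul_transpose_same Φ).det_add_smul_one_pos hs
  rw [Kb, sub_self, mulVec_zero, zero_dotProduct, mul_zero, zero_add, det_smul, Fintype.card_fin,
    log_div (by positivity) (sqrt_pos.mpr (mul_pos h1 h2)).ne', log_mul (by positivity) h12.ne',
    log_pow, log_sqrt (mul_pos h1 h2).le, log_mul h1.ne' h2.ne']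
  ring

theorem tendsto_log_Perr_div_log_zero_means (hS1 : S1.PosSemidef) (hS2 : S2.PosSemidef)
    {P1 P2 : ℝ} (hP1 : 0 < P1) (hP2 : 0 < P2) :
    Tendsto (fun s => log (Perr Φ S1 S2 0 0 P1 P2 s) / log s) (𝓝[>] 0)
      (𝓝 ((Φ * (S1 + S2) * Φᵀ).rank / 2 - ((Φ * S1 * Φᵀ).rank + (Φ * S2 * Φᵀ).rank) / 4)) := by
  have h1 := (hS1.mul_mul_transpose_same Φ).tendsto_log_det_add_smul_one_sub_mul_log
  have h2 := (hS2.mul_mul_transpose_same Φ).tendsto_log_det_add_smul_one_sub_mul_log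
  have h12 := ((hS1.add hS2).mul_mul_transpose_same Φ).tendsto_log_det_add_smul_one_sub_mul_log
  refine tendsto_div_log_of_tendsto_sub_mul_log
    ((tendsto_const_nhds (x := log (sqrt (P1 * P2)))).sub
      (((tendsto_const_nhds (x := M * log (1 / 2))).add h12).sub ((h1.add h2).div_const 2)
        |>.div_const 2) |>.congr' ?_)
  filter_upwards [self_mem_nhdsWithin] with s hs
  rw [log_Perr Φ 0 0 (mul_pos hP1 hP2), Kb_zero_means Φ hS1 hS2 hs]
  ring

end Bhattacharyya

theorem theorem2_case_rho2_lt_M_lt_rho12_general (M N : ℕ)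
    (Φ : Matrix (Fin M) (Fin N) ℝ) (S1 S2 : Matrix (Fin N) (Fin N) ℝ)
    (hS1 : S1.PosSemidef) (hS2 : S2.PosSemidef) (μ1 μ2 : Fin N → ℝ)
    (hμ1 : μ1 = 0) (hμ2 : μ2 = 0)
    (P1 P2 : ℝ) (hP1 : 0 < P1) (hP2 : 0 < P2)
    (hρa : S1.rank ≤ S2.rank)
    (hr1 : (Φ * S1 * Φᵀ).rank = min M S1.rank)
    (hr2 : (Φ * S2 * Φᵀ).rank = min M S2.rank)
    (hr12 : (Φ * (S1 + S2) * Φᵀ).rank = min M (S1 + S2).rank)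
    (hcase1 : S2.rank < M) (hcase2 : M < (S1 + S2).rank) :
    Filter.Tendsto
      (fun s : ℝ => Real.log (Perr Φ S1 S2 μ1 μ2 P1 P2 s) / Real.log s) (𝓝[>] 0)
      (𝓝 ((2 * (M : ℝ) - (S1.rank : ℝ) - (S2.rank : ℝ)) / 4)) := by
  subst hμ1 hμ2
  convert tendsto_log_Perr_div_log_zero_means Φ hS1 hS2 hP1 hP2 using 2
  rw [hr1, hr2, hr12, min_eq_right (hρa.trans hcase1.le), min_eq_right hcase1.le,
    min_eq_left hcase2.le]
  ring

/-- Theorem 2, case ρ2 < M < ρ12: the diversity order is (2M - ρ1 - ρ2)/4. -/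
theorem theorem2_case_rho2_lt_M_lt_rho12 (M N : ℕ) (hM : 0 < M) (hN : 0 < N)
    (Φ : Matrix (Fin M) (Fin N) ℝ) (S1 S2 : Matrix (Fin N) (Fin N) ℝ)
    (hS1 : S1.PosSemidef) (hS2 : S2.PosSemidef) (μ1 μ2 : Fin N → ℝ)
    (hμ1 : μ1 = 0) (hμ2 : μ2 = 0)
    (P1 P2 : ℝ) (hP1 : 0 < P1) (hP2 : 0 < P2) (hP : P1 + P2 = 1)
    (hρa : S1.rank ≤ S2.rank) (hρb : S2.rank ≤ (S1 + S2).rank)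
    (hr1 : (Φ * S1 * Φᵀ).rank = min M S1.rank)
    (hr2 : (Φ * S2 * Φᵀ).rank = min M S2.rank)
    (hr12 : (Φ * (S1 + S2) * Φᵀ).rank = min M (S1 + S2).rank)
    (hcase1 : S2.rank < M) (hcase2 : M < (S1 + S2).rank) :
    Filter.Tendsto
      (fun s : ℝ => Real.log (Perr Φ S1 S2 μ1 μ2 P1 P2 s) / Real.log s) (𝓝[>] 0)
      (𝓝 ((2 * (M : ℝ) - (S1.rank : ℝ) - (S2.rank : ℝ)) / 4)) :=
  theorem2_case_rho2_lt_M_lt_rho12_general M N Φ S1 S2 hS1 hS2 μ1 μ2 hμ1 hμ2 P1 P2 hP1 hP2 hρa hr1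
    hr2 hr12 hcase1 hcase2
end

section
/- (Multiclass diversity order.) Consider L ≥ 3 zero-mean classes and the union–Bhattacharyya upper bound P̄_err(σ²) = Σ_{i=1}^{L} Σ_{j ≠ i} P_i · sqrt(P_i·P_j) · exp(−K_{ij}(σ²)). If for every pair i ≠ j one has r_i + r_j < 2·r_{ij}, then lim_{σ² → 0+} log P̄_err(σ²) / log σ² = min_{i ≠ j} (2·r_{ij} − r_i − r_j)/4; i.e., the diversity order of the multiclass bound equals the smallest pairwise diversity order. -/
open Matrix MeasureTheory Filter Real Topology

/-- Union–Bhattacharyya upper bound to the misclassification probability for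
`L` zero-mean classes:
`P̄_err(σ²) = Σ_i Σ_{j ≠ i} P_i sqrt(P_i P_j) exp (-K_ij(σ²))`. -/
noncomputable def PerrMulti {M N L : ℕ} (Φ : Matrix (Fin M) (Fin N) ℝ)
    (S : Fin L → Matrix (Fin N) (Fin N) ℝ) (P : Fin L → ℝ) (s : ℝ) : ℝ :=
  ∑ i, ∑ j ∈ Finset.univ.erase i,
    P i * Real.sqrt (P i * P j) * Real.exp (-(Kb Φ (S i) (S j) 0 0 s))

/-! For positive semidefinite `A`, `det (A + s • 1) = ∏ (λᵢ + s)` behaves like `c · s ^ (M - rank A)`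
as `s → 0⁺`, since each zero eigenvalue contributes a factor `s`. As
`exp (-K_ij) = det (½ (A_i + A_j + s)) ^ (-1/2) · det (A_i + s) ^ (1/4) · det (A_j + s) ^ (1/4)`,
each pairwise term behaves like `c_ij · s ^ d_ij` with `d_ij = (2 r_ij - r_i - r_j) / 4`, and a
positive combination of such terms behaves like `C · s ^ (min d_ij)`. Finally `f ~ C · s ^ d`
forces `log f / log s → d`. -/

open Finset

def HasPowerOrder (f : ℝ → ℝ) (d : ℝ) : Prop :=
  ∃ c, 0 < c ∧ Tendsto (fun s => f s * s ^ (-d)) (𝓝[>] 0) (𝓝 c)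

namespace HasPowerOrder

variable {f g : ℝ → ℝ} {d e : ℝ}

lemma congr (hf : HasPowerOrder f d) (hfg : ∀ᶠ s in 𝓝[>] 0, f s = g s) (hde : d = e) :
    HasPowerOrder g e := by
  obtain ⟨c, hc, hlim⟩ := hf
  refine ⟨c, hc, hlim.congr' ?_⟩
  filter_upwards [hfg] with s hs
  rw [hs, hde]

lemma eventually_pos (hf : HasPowerOrder f d) : ∀ᶠ s in 𝓝[>] 0, 0 < f s := by
  obtain ⟨c, hc, hlim⟩ := hf
  filter_upwards [hlim.eventually (lt_mem_nhds hc), self_mem_nhdsWithin] with s hfs hs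
  exact pos_of_mul_pos_left hfs (rpow_pos_of_pos hs _).le

lemma const_mul (hf : HasPowerOrder f d) {a : ℝ} (ha : 0 < a) :
    HasPowerOrder (fun s => a * f s) d := by
  obtain ⟨c, hc, hlim⟩ := hf
  exact ⟨a * c, mul_pos ha hc, by simpa only [mul_assoc] using hlim.const_mul a⟩

lemma mul (hf : HasPowerOrder f d) (hg : HasPowerOrder g e) :
    HasPowerOrder (fun s => f s * g s) (d + e) := by
  obtain ⟨a, ha, hfa⟩ := hf
  obtain ⟨b, hb, hgb⟩ := hg
  refine ⟨a * b, mul_pos ha hb, (hfa.mul hgb).congr' ?_⟩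
  filter_upwards [self_mem_nhdsWithin] with s hs
  rw [neg_add, rpow_add hs]
  ring

lemma rpow (hf : HasPowerOrder f d) (p : ℝ) : HasPowerOrder (fun s => f s ^ p) (d * p) := by
  have hpos := hf.eventually_pos
  obtain ⟨c, hc, hlim⟩ := hf
  refine ⟨c ^ p, rpow_pos_of_pos hc p, (hlim.rpow_const (Or.inl hc.ne')).congr' ?_⟩
  filter_upwards [hpos, self_mem_nhdsWithin] with s hfs (hs : 0 < s)
  rw [mul_rpow hfs.le (rpow_nonneg hs.le _), ← rpow_mul hs.le, neg_mul]

lemma prod {ι : Type*} (t : Finset ι) {f : ι → ℝ → ℝ} {d : ι → ℝ}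
    (h : ∀ i ∈ t, HasPowerOrder (f i) (d i)) :
    HasPowerOrder (fun s => ∏ i ∈ t, f i s) (∑ i ∈ t, d i) := by
  choose! c hc hlim using h
  refine ⟨∏ i ∈ t, c i, prod_pos hc, (tendsto_finsetProd t hlim).congr' ?_⟩
  filter_upwards [self_mem_nhdsWithin] with s hs
  rw [prod_mul_distrib, ← rpow_sum_of_pos hs, sum_neg_distrib]

lemma sum {ι : Type*} {t : Finset ι} (ht : t.Nonempty) {f : ι → ℝ → ℝ} {d : ι → ℝ}
    (h : ∀ i ∈ t, HasPowerOrder (f i) (d i)) :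
    HasPowerOrder (fun s => ∑ i ∈ t, f i s) (t.inf' ht d) := by
  choose! c hc hlim using h
  set m := t.inf' ht d
  have hm : ∀ i ∈ t, 0 ≤ d i - m := fun i hi => sub_nonneg.mpr (inf'_le d hi)
  -- the terms of minimal order keep their constant, the others tend to `0 ^ (positive) = 0`
  have hterm : ∀ i ∈ t, Tendsto (fun s => f i s * s ^ (-d i) * s ^ (d i - m)) (𝓝[>] 0)
      (𝓝 (c i * 0 ^ (d i - m))) := fun i hi =>
    (hlim i hi).mul ((continuous_rpow_const (hm i hi)).tendsto 0 |>.mono_left nhdsWithin_le_nhds)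
  refine ⟨∑ i ∈ t, c i * 0 ^ (d i - m), ?_, (tendsto_finsetSum t hterm).congr' ?_⟩
  · obtain ⟨i, hi, him⟩ := exists_mem_eq_inf' ht d
    refine sum_pos' (fun j hj => mul_nonneg (hc j hj).le (rpow_nonneg le_rfl _)) ⟨i, hi, ?_⟩
    rw [← him, sub_self, rpow_zero, mul_one]
    exact hc i hi
  · filter_upwards [self_mem_nhdsWithin] with s hs
    rw [sum_mul]
    refine sum_congr rfl fun i _ => ?_
    rw [mul_assoc, ← rpow_add hs]
    ring_nf

lemma tendsto_log_div_log (hf : HasPowerOrder f d) :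
    Tendsto (fun s => log (f s) / log s) (𝓝[>] 0) (𝓝 d) := by
  have hpos := hf.eventually_pos
  obtain ⟨c, hc, hlim⟩ := hf
  have h := (((continuousAt_log hc.ne').tendsto.comp hlim).div_atBot
    tendsto_log_nhdsGT_zero).add_const d
  rw [zero_add] at h
  refine h.congr' ?_
  filter_upwards [hpos, Ioo_mem_nhdsGT one_pos] with s hfs ⟨hs0, hs1⟩
  have hlog : log s ≠ 0 := (log_neg hs0 hs1).ne
  simp only [Function.comp_apply]
  rw [log_mul hfs.ne' (rpow_pos_of_pos hs0 _).ne', log_rpow hs0]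
  field_simp
  ring

end HasPowerOrder

lemma hasPowerOrder_self : HasPowerOrder (fun s => s) 1 :=
  ⟨1, one_pos, tendsto_const_nhds.congr' <| by
    filter_upwards [self_mem_nhdsWithin] with s (hs : 0 < s)
    rw [rpow_neg_one, mul_inv_cancel₀ hs.ne']⟩

lemma hasPowerOrder_zero_of_continuousAt {f : ℝ → ℝ} (hf : ContinuousAt f 0) (h0 : 0 < f 0) :
    HasPowerOrder f 0 :=
  ⟨f 0, h0, by simpa using hf.tendsto.mono_left nhdsWithin_le_nhds⟩

lemma Matrix.IsHermitian.det_add_smul_one_s17 {n : Type*} [Fintype n] [DecidableEq n]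
    {A : Matrix n n ℝ} (hA : A.IsHermitian) (s : ℝ) :
    (A + s • 1).det = ∏ i, (hA.eigenvalues i + s) := by
  set U : Matrix n n ℝ := (hA.eigenvectorUnitary : Matrix n n ℝ)
  have hU : U * star U = 1 := (Matrix.mem_unitaryGroup_iff).mp hA.eigenvectorUnitary.2
  have hdiag : A + s • 1 = U * diagonal (fun i => hA.eigenvalues i + s) * star U := by
    conv_lhs => rw [hA.spectral_theorem]
    rw [show diagonal (fun i => hA.eigenvalues i + s) =
        diagonal (RCLike.ofReal ∘ hA.eigenvalues) + s • 1 by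
      rw [smul_one_eq_diagonal, diagonal_add]; rfl]
    rw [Matrix.mul_add, Matrix.add_mul, Matrix.mul_smul, Matrix.mul_one, Matrix.smul_mul, hU]
    rfl
  rw [hdiag, det_mul_right_comm, hU, Matrix.one_mul, det_diagonal]

lemma Matrix.PosSemidef.hasPowerOrder_det_add_smul_one {n : Type*} [Fintype n] [DecidableEq n]
    {A : Matrix n n ℝ} (hA : A.PosSemidef) :
    HasPowerOrder (fun s => (A + s • 1).det) (Fintype.card n - A.rank) := by
  set μ := hA.isHermitian.eigenvalues
  have hfactor : ∀ i, HasPowerOrder (fun s => μ i + s) (if μ i = 0 then 1 else 0) := fun i => by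
    split_ifs with hi
    · simpa [hi] using hasPowerOrder_self
    · exact hasPowerOrder_zero_of_continuousAt (by fun_prop)
        (by simpa using (hA.eigenvalues_nonneg i).lt_of_ne' hi)
  refine (HasPowerOrder.prod univ fun i _ => hfactor i).congr
    (Eventually.of_forall fun s => (hA.isHermitian.det_add_smul_one_s17 s).symm) ?_
  have hcard := card_filter_add_card_filter_not (s := univ) (fun i => μ i ≠ 0)
  rw [hA.isHermitian.rank_eq_card_non_zero_eigs, Fintype.card_subtype, sum_boole]
  simp only [card_univ, not_not] at hcard ⊢
  rw [← hcard]
  push_cast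
  ring

lemma Matrix.PosSemidef.mul_mul_transpose_same_s17 {m n : Type*} [Fintype n] [Fintype m]
    {S : Matrix n n ℝ} (hS : S.PosSemidef) (Φ : Matrix m n ℝ) : (Φ * S * Φᵀ).PosSemidef := by
  simpa using hS.mul_mul_conjTranspose_same Φ

lemma exp_neg_half_log_div_sqrt {a b c : ℝ} (ha : 0 < a) (hb : 0 < b) (hc : 0 < c) :
    exp (-(1 / 2 * log (a / √(b * c)))) = a ^ (-1 / 2 : ℝ) * b ^ (1 / 4 : ℝ) * c ^ (1 / 4 : ℝ) := by
  rw [rpow_def_of_pos ha, rpow_def_of_pos hb, rpow_def_of_pos hc, ← exp_add, ← exp_add,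
    log_div ha.ne' (sqrt_pos.mpr (mul_pos hb hc)).ne', log_sqrt (mul_pos hb hc).le,
    log_mul hb.ne' hc.ne']
  ring_nf

lemma hasPowerOrder_exp_neg_Kb {M N : ℕ} (Φ : Matrix (Fin M) (Fin N) ℝ)
    {S₁ S₂ : Matrix (Fin N) (Fin N) ℝ} (h₁ : S₁.PosSemidef) (h₂ : S₂.PosSemidef) :
    HasPowerOrder (fun s => exp (-Kb Φ S₁ S₂ 0 0 s))
      ((2 * ((Φ * (S₁ + S₂) * Φᵀ).rank : ℝ) - (Φ * S₁ * Φᵀ).rank - (Φ * S₂ * Φᵀ).rank) / 4) := by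
  have h₁₂ := ((h₁.add h₂).mul_mul_transpose_same_s17 Φ).hasPowerOrder_det_add_smul_one.const_mul
    (by positivity : (0 : ℝ) < (1 / 2) ^ M)
  have hd₁ := (h₁.mul_mul_transpose_same_s17 Φ).hasPowerOrder_det_add_smul_one
  have hd₂ := (h₂.mul_mul_transpose_same_s17 Φ).hasPowerOrder_det_add_smul_one
  refine (((h₁₂.rpow (-1 / 2)).mul (hd₁.rpow (1 / 4))).mul (hd₂.rpow (1 / 4))).congr ?_
    (by simp only [Fintype.card_fin]; ring)
  filter_upwards [h₁₂.eventually_pos, hd₁.eventually_pos, hd₂.eventually_pos] with s ha hb hc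
  rw [← exp_neg_half_log_div_sqrt ha hb hc]
  simp only [Kb, sub_zero, mulVec_zero, zero_dotProduct, mul_zero, zero_add, det_smul,
    Fintype.card_fin]

theorem multiclass_diversity_order_general (M N L : ℕ) (hL : 3 ≤ L)
    (Φ : Matrix (Fin M) (Fin N) ℝ) (S : Fin L → Matrix (Fin N) (Fin N) ℝ)
    (hS : ∀ i, (S i).PosSemidef)
    (P : Fin L → ℝ) (hP : ∀ i, 0 < P i) :
    Filter.Tendsto (fun s : ℝ => Real.log (PerrMulti Φ S P s) / Real.log s) (𝓝[>] 0)
      (𝓝 (sInf {d : ℝ | ∃ i j : Fin L, i ≠ j ∧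
        d = (2 * ((Φ * (S i + S j) * Φᵀ).rank : ℝ) - ((Φ * S i * Φᵀ).rank : ℝ)
          - ((Φ * S j * Φᵀ).rank : ℝ)) / 4})) := by
  have : Nontrivial (Fin L) := Fin.nontrivial_iff_two_le.mpr (by omega)
  set D : Fin L × Fin L → ℝ := fun p => (2 * ((Φ * (S p.1 + S p.2) * Φᵀ).rank : ℝ)
    - (Φ * S p.1 * Φᵀ).rank - (Φ * S p.2 * Φᵀ).rank) / 4
  obtain ⟨i, j, hij⟩ := exists_pair_ne (Fin L)
  have hne : (univ : Finset (Fin L)).offDiag.Nonempty := ⟨(i, j), by simpa using hij⟩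
  have horder : HasPowerOrder (PerrMulti Φ S P) (univ.offDiag.inf' hne D) := by
    refine (HasPowerOrder.sum hne fun p _ => (hasPowerOrder_exp_neg_Kb Φ (hS p.1) (hS p.2)).const_mul
      (mul_pos (hP p.1) (sqrt_pos.mpr (mul_pos (hP p.1) (hP p.2))))).congr
      (Eventually.of_forall fun s => ?_) rfl
    rw [PerrMulti, sum_finset_product _ univ (fun i => univ.erase i)]
    simp [ne_comm]
  have hset : {d : ℝ | ∃ i j : Fin L, i ≠ j ∧ d = D (i, j)} = D '' (univ.offDiag : Finset (Fin L × Fin L)) := by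
    ext d
    simp [eq_comm]
  rw [hset, ← inf'_eq_csInf_image _ hne]
  exact horder.tendsto_log_div_log

/-- Multiclass diversity order: with `L ≥ 3` zero-mean classes, if
`r_i + r_j < 2 r_ij` for every pair `i ≠ j`, then
`lim_{σ²→0⁺} log P̄_err(σ²) / log σ² = min_{i ≠ j} (2 r_ij - r_i - r_j)/4`,
the smallest pairwise diversity order. -/
theorem multiclass_diversity_order (M N L : ℕ) (hM : 0 < M) (hN : 0 < N) (hL : 3 ≤ L)
    (Φ : Matrix (Fin M) (Fin N) ℝ) (S : Fin L → Matrix (Fin N) (Fin N) ℝ)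
    (hS : ∀ i, (S i).PosSemidef)
    (P : Fin L → ℝ) (hP : ∀ i, 0 < P i) (hPsum : ∑ i, P i = 1)
    (hrank : ∀ i j : Fin L, i ≠ j →
      (Φ * S i * Φᵀ).rank + (Φ * S j * Φᵀ).rank < 2 * (Φ * (S i + S j) * Φᵀ).rank) :
    Filter.Tendsto (fun s : ℝ => Real.log (PerrMulti Φ S P s) / Real.log s) (𝓝[>] 0)
      (𝓝 (sInf {d : ℝ | ∃ i j : Fin L, i ≠ j ∧
        d = (2 * ((Φ * (S i + S j) * Φᵀ).rank : ℝ) - ((Φ * S i * Φᵀ).rank : ℝ)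
          - ((Φ * S j * Φᵀ).rank : ℝ)) / 4})) :=
  multiclass_diversity_order_general M N L hL Φ S hS P hP
end
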